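/- arXiv:1812.05896 — 3 statements merged into one kernel-verified Lean document; each statement's English description precedes it below -/
import Mathlib

section
/- The derivative of V at 0 equals 1/2: V'(0) = 1/2, where V(x) = (∫_{0}^{2π} cos θ · e^{x cos θ} dθ) / (∫_{0}^{2π} e^{x cos θ} dθ). -/
/-!
`V x` is the mean of `cos` under the weight `exp (x * cos θ)`; differentiating under the integral
sign shows that `V'(x)` is the variance of `cos` under that weight. At `x = 0` the weight is
uniform, so the mean vanishes and the variance is `(2π)⁻¹ ∫ cos² = 1/2`.
-/

open Real MeasureTheory intervalIntegral

noncomputable def V (x : ℝ) : ℝ :=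
  (∫ θ in (0:ℝ)..(2*π), Real.cos θ * Real.exp (x * Real.cos θ)) /
  (∫ θ in (0:ℝ)..(2*π), Real.exp (x * Real.cos θ))

/- Differentiation under the integral sign, with the `x`-derivative dominated on `ball x₀ 1` by
`|g t| * exp (|x₀| + 1)` because `|cos| ≤ 1`. -/
theorem hasDerivAt_integral_mul_exp_mul_cos {g : ℝ → ℝ} {a b : ℝ}
    (hg : IntervalIntegrable g volume a b) (x₀ : ℝ) :
    HasDerivAt (fun x => ∫ t in a..b, g t * exp (x * cos t))
      (∫ t in a..b, g t * cos t * exp (x₀ * cos t)) x₀ := by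
  have hexp : ∀ x, Continuous fun t => exp (x * cos t) := fun x => by fun_prop
  have hF_int : ∀ x, IntervalIntegrable (fun t => g t * exp (x * cos t)) volume a b :=
    fun x => hg.mul_continuousOn (hexp x).continuousOn
  have h_bound : ∀ t, ∀ x ∈ Metric.ball x₀ 1,
      ‖g t * cos t * exp (x * cos t)‖ ≤ |g t| * exp (|x₀| + 1) := by
    intro t x hx
    have hx : |x| ≤ |x₀| + 1 := by
      have := abs_sub_abs_le_abs_sub x x₀
      rw [Metric.mem_ball, Real.dist_eq] at hx
      linarith
    have hexp_le : exp (x * cos t) ≤ exp (|x₀| + 1) := exp_le_exp.2 <| calc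
      x * cos t ≤ |x| * |cos t| := abs_mul x (cos t) ▸ le_abs_self _
      _ ≤ |x| := mul_le_of_le_one_right (abs_nonneg x) (abs_cos_le_one t)
      _ ≤ |x₀| + 1 := hx
    calc ‖g t * cos t * exp (x * cos t)‖ = |g t| * |cos t| * exp (x * cos t) := by
          rw [norm_mul, norm_mul, norm_of_nonneg (exp_pos _).le, Real.norm_eq_abs,
            Real.norm_eq_abs]
      _ ≤ |g t| * 1 * exp (|x₀| + 1) := by gcongr; exact abs_cos_le_one t
      _ = |g t| * exp (|x₀| + 1) := by rw [mul_one]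
  refine (hasDerivAt_integral_of_dominated_loc_of_deriv_le (Metric.ball_mem_nhds x₀ one_pos)
    (Filter.Eventually.of_forall fun x => (hF_int x).def'.aestronglyMeasurable) (hF_int x₀)
    (((hg.mul_continuousOn continuous_cos.continuousOn).mul_continuousOn
      (hexp x₀).continuousOn).def'.aestronglyMeasurable)
    (Filter.Eventually.of_forall fun t _ => h_bound t)
    (hg.abs.mul_const _)
    (Filter.Eventually.of_forall fun t _ x _ => ?_)).2
  exact (((hasDerivAt_id x).mul_const (cos t)).exp.const_mul (g t)).congr_deriv (by simp; ring)

theorem hasDerivAt_V (x : ℝ) :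
    HasDerivAt V ((∫ θ in (0:ℝ)..(2*π), cos θ ^ 2 * exp (x * cos θ)) /
      (∫ θ in (0:ℝ)..(2*π), exp (x * cos θ)) - V x ^ 2) x := by
  have hN := hasDerivAt_integral_mul_exp_mul_cos
    (continuous_cos.intervalIntegrable 0 (2 * π)) x
  have hD := hasDerivAt_integral_mul_exp_mul_cos (g := fun _ => 1)
    (intervalIntegrable_const (a := 0) (b := 2 * π)) x
  simp only [one_mul] at hD
  have hD_pos : 0 < ∫ θ in (0:ℝ)..(2*π), exp (x * cos θ) :=
    intervalIntegral_pos_of_pos ((by fun_prop : Continuous _).intervalIntegrable _ _)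
      (fun _ => exp_pos _) (by positivity)
  simp only [← sq] at hN
  refine (hN.div hD hD_pos.ne').congr_deriv ?_
  rw [V]
  -- opaque atoms, so that `field_simp` does not also rewrite inside the integrands
  generalize (∫ θ in (0:ℝ)..(2*π), exp (x * cos θ)) = D at hD_pos ⊢
  generalize (∫ θ in (0:ℝ)..(2*π), cos θ * exp (x * cos θ)) = N
  generalize (∫ θ in (0:ℝ)..(2*π), cos θ ^ 2 * exp (x * cos θ)) = M
  field_simp

theorem V_deriv_zero : HasDerivAt V (1/2) 0 := by
  have hcos_sq : ∫ θ in (0:ℝ)..(2*π), cos θ ^ 2 = π := by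
    simp [integral_cos_sq]
  have hV : V 0 = 0 := by simp [V, integral_cos]
  convert hasDerivAt_V 0 using 1
  simp only [one_div, zero_mul, exp_zero, mul_one, hcos_sq, intervalIntegral.integral_const,
    sub_zero, smul_eq_mul, hV, ne_eq, OfNat.ofNat_ne_zero, not_false_eq_true, zero_pow]
  field_simp
end

section
/- V(x) < x/2 for all x > 0, where V(x) = (∫_{0}^{2π} cos θ e^{x cos θ} dθ)/(∫_{0}^{2π} e^{x cos θ} dθ). -/
/-!
Write `I₀ = ∫ e^{x cos θ}` and `I₁ = ∫ cos θ e^{x cos θ}` over a period. Integrating by parts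
twice (the antiderivative `(x/4 · sin 2θ - sin θ) e^{x cos θ}` is `2π`-periodic) gives
`x/2 · I₀ - I₁ = x²/2 · ∫ sin²θ cos θ e^{x cos θ}`. Averaging the last integrand with its shift
by `π` replaces `e^{x cos θ}` by `sinh (x cos θ)`, and `cos θ · sinh (x cos θ) ≥ 0` with strict
inequality on `(0, π/2)`, so the right-hand side is positive for `x > 0`.
-/

open Real MeasureTheory intervalIntegral

theorem Function.Periodic.intervalIntegral_comp_add_right {E : Type*} [NormedAddCommGroup E]
    [NormedSpace ℝ E] {f : ℝ → E} {T : ℝ} (hf : Function.Periodic f T) (t c : ℝ) :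
    ∫ θ in t..t + T, f (θ + c) = ∫ θ in t..t + T, f θ := by
  rw [integral_comp_add_right, add_right_comm]
  exact hf.intervalIntegral_add_eq (t + c) t

theorem mul_sinh_mul_nonneg {x : ℝ} (hx : 0 ≤ x) (c : ℝ) : 0 ≤ c * sinh (x * c) := by
  rcases le_total 0 c with hc | hc
  · exact mul_nonneg hc (sinh_nonneg_iff.2 (mul_nonneg hx hc))
  · exact mul_nonneg_of_nonpos_of_nonpos hc
      (sinh_nonpos_iff.2 (mul_nonpos_of_nonneg_of_nonpos hx hc))

theorem integral_exp_mul_cos_pos (x : ℝ) : 0 < ∫ θ in (0:ℝ)..(2*π), exp (x * cos θ) :=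
  intervalIntegral_pos_of_pos (Continuous.intervalIntegrable (by fun_prop) _ _)
    (fun θ ↦ exp_pos _) (by positivity)

theorem hasDerivAt_sin_two_mul_sub_sin_mul_exp_mul_cos (x t : ℝ) :
    HasDerivAt (fun θ ↦ (x / 4 * sin (2 * θ) - sin θ) * exp (x * cos θ))
      ((x / 2 - cos t) * exp (x * cos t) - x ^ 2 / 2 * (sin t ^ 2 * cos t * exp (x * cos t)))
      t := by
  have hsin2 : HasDerivAt (fun θ ↦ sin (2 * θ)) (cos (2 * t) * 2) t := by
    simpa using ((hasDerivAt_id t).const_mul 2).sin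
  refine (((hsin2.const_mul (x / 4)).sub (hasDerivAt_sin t)).mul
    ((hasDerivAt_cos t).const_mul x).exp).congr_deriv ?_
  simp only [Pi.sub_apply, cos_two_mul, sin_two_mul]
  linear_combination (x * exp (x * cos t)) * sin_sq_add_cos_sq t

theorem half_mul_integral_exp_sub_integral_cos_mul_exp (x : ℝ) :
    x / 2 * (∫ θ in (0:ℝ)..(2*π), exp (x * cos θ)) - ∫ θ in (0:ℝ)..(2*π), cos θ * exp (x * cos θ)
      = x ^ 2 / 2 * ∫ θ in (0:ℝ)..(2*π), sin θ ^ 2 * cos θ * exp (x * cos θ) := by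
  have hFTC := integral_eq_sub_of_hasDerivAt (a := 0) (b := 2 * π)
    (fun t _ ↦ hasDerivAt_sin_two_mul_sub_sin_mul_exp_mul_cos x t)
    (Continuous.intervalIntegrable (by fun_prop) _ _)
  rw [integral_sub (Continuous.intervalIntegrable (by fun_prop) _ _)
    (Continuous.intervalIntegrable (by fun_prop) _ _), intervalIntegral.integral_const_mul] at hFTC
  have h4π : sin (2 * (2 * π)) = 0 := by simp [sin_two_mul]
  simp only [h4π, sin_two_pi, mul_zero, sin_zero, sub_self, zero_mul, sub_eq_zero] at hFTC
  rw [← hFTC, ← intervalIntegral.integral_const_mul,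
    ← integral_sub (Continuous.intervalIntegrable (by fun_prop) _ _)
      (Continuous.intervalIntegrable (by fun_prop) _ _)]
  congr 1 with θ
  ring

theorem integral_sin_sq_mul_cos_mul_exp_eq_integral_sinh (x : ℝ) :
    ∫ θ in (0:ℝ)..(2*π), sin θ ^ 2 * cos θ * exp (x * cos θ)
      = ∫ θ in (0:ℝ)..(2*π), sin θ ^ 2 * (cos θ * sinh (x * cos θ)) := by
  set F : ℝ → ℝ := fun θ ↦ sin θ ^ 2 * cos θ * exp (x * cos θ)
  have hF : Function.Periodic F (2 * π) := fun θ ↦ by simp [F]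
  have hcont : Continuous F := by fun_prop
  have hshift := hF.intervalIntegral_comp_add_right 0 π
  rw [zero_add] at hshift
  have hsymm : ∀ θ, F θ + F (θ + π) = 2 * (sin θ ^ 2 * (cos θ * sinh (x * cos θ))) := fun θ ↦ by
    simp only [F, sin_add_pi, cos_add_pi, sinh_eq]
    ring_nf
  suffices 2 * ∫ θ in (0:ℝ)..(2*π), F θ
      = 2 * ∫ θ in (0:ℝ)..(2*π), sin θ ^ 2 * (cos θ * sinh (x * cos θ)) by linarith
  calc 2 * ∫ θ in (0:ℝ)..(2*π), F θ
      = (∫ θ in (0:ℝ)..(2*π), F θ) + ∫ θ in (0:ℝ)..(2*π), F (θ + π) := by rw [hshift]; ring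
    _ = ∫ θ in (0:ℝ)..(2*π), 2 * (sin θ ^ 2 * (cos θ * sinh (x * cos θ))) := by
      rw [← integral_add (f := F) (g := fun θ ↦ F (θ + π)) (hcont.intervalIntegrable _ _)
        ((hcont.comp (continuous_add_const π)).intervalIntegrable _ _)]
      simp only [hsymm]
    _ = 2 * ∫ θ in (0:ℝ)..(2*π), sin θ ^ 2 * (cos θ * sinh (x * cos θ)) :=
      intervalIntegral.integral_const_mul _ _

theorem integral_sin_sq_mul_cos_mul_exp_pos {x : ℝ} (hx : 0 < x) :
    0 < ∫ θ in (0:ℝ)..(2*π), sin θ ^ 2 * cos θ * exp (x * cos θ) := by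
  rw [integral_sin_sq_mul_cos_mul_exp_eq_integral_sinh]
  have hnonneg : ∀ θ, 0 ≤ sin θ ^ 2 * (cos θ * sinh (x * cos θ)) := fun θ ↦
    mul_nonneg (sq_nonneg _) (mul_sinh_mul_nonneg hx.le _)
  have hpos : 0 < ∫ θ in (0:ℝ)..(π / 2), sin θ ^ 2 * (cos θ * sinh (x * cos θ)) := by
    refine intervalIntegral_pos_of_pos_on (Continuous.intervalIntegrable (by fun_prop) _ _)
      (fun θ hθ ↦ ?_) (by positivity)
    have hsin : 0 < sin θ := sin_pos_of_pos_of_lt_pi hθ.1 (by linarith [hθ.2, pi_pos])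
    have hcos : 0 < cos θ := cos_pos_of_mem_Ioo ⟨by linarith [hθ.1, pi_pos], hθ.2⟩
    have hsinh : 0 < sinh (x * cos θ) := sinh_pos_iff.2 (mul_pos hx hcos)
    positivity
  exact hpos.trans_le <| integral_mono_interval le_rfl (by positivity) (by linarith [pi_pos])
    (Filter.Eventually.of_forall hnonneg) (Continuous.intervalIntegrable (by fun_prop) _ _)

theorem V_lt_half_x (x : ℝ) (hx : 0 < x) : V x < x / 2 := by
  rw [V, div_lt_iff₀ (integral_exp_mul_cos_pos x)]
  have hgap := half_mul_integral_exp_sub_integral_cos_mul_exp x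
  have hpos := mul_pos (by positivity : 0 < x ^ 2 / 2) (integral_sin_sq_mul_cos_mul_exp_pos hx)
  linarith
end

section
/- lim_{x → ∞} V(x) = 1, where V(x) = (∫_{0}^{2π} cos θ e^{x cos θ} dθ)/(∫_{0}^{2π} e^{x cos θ} dθ). -/
open Real MeasureTheory intervalIntegral

/-!
The measures `e^{x g} dμ / ∫ e^{x g} dμ` concentrate, as `x → ∞`, where `g` is close to its
essential supremum `M` (the hypotheses `g ≤ M` a.e. and `μ {M - η < g} ≠ 0` for all `η > 0`).
Quantitatively, for `s > 0` Markov's inequality gives `∫ e^{x g} ≥ μ {M - s/2 < g} e^{x (M - s/2)}`,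
while splitting according to whether `g ≥ M - s` gives
`∫ (M - g) e^{x g} ≤ s ∫ e^{x g} + e^{x (M - s)} ∫ (M - g)`. Dividing, the gap between `M` and the
Gibbs average of `g` is at most `s + C e^{-s x / 2}`. For `V` take `g = cos` on `(0, 2π]`, `M = 1`.
-/

open Filter Topology Set

namespace MeasureTheory

variable {α : Type*} [MeasurableSpace α] {μ : Measure α} {g : α → ℝ} {M x : ℝ}

theorem integrable_mul_exp_mul_of_ae_le (hg : Integrable g μ) (hgM : ∀ᵐ a ∂μ, g a ≤ M)
    (hx : 0 ≤ x) : Integrable (fun a ↦ g a * exp (x * g a)) μ := by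
  refine hg.mul_bdd (by fun_prop) (c := exp (x * M)) ?_
  filter_upwards [hgM] with a ha
  rw [norm_of_nonneg (exp_pos _).le]
  gcongr

variable [IsFiniteMeasure μ]

theorem integrable_exp_mul_of_ae_le (hg : AEStronglyMeasurable g μ) (hgM : ∀ᵐ a ∂μ, g a ≤ M)
    (hx : 0 ≤ x) : Integrable (fun a ↦ exp (x * g a)) μ := by
  refine .of_bound (by fun_prop) (exp (x * M)) ?_
  filter_upwards [hgM] with a ha
  rw [norm_of_nonneg (exp_pos _).le]
  gcongr

theorem measureReal_mul_exp_le_integral_exp (hg : AEStronglyMeasurable g μ)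
    (hgM : ∀ᵐ a ∂μ, g a ≤ M) (hx : 0 ≤ x) (η : ℝ) :
    μ.real {a | M - η < g a} * exp (x * (M - η)) ≤ ∫ a, exp (x * g a) ∂μ := by
  rw [mul_comm]
  refine le_trans ?_ (mul_meas_ge_le_integral_of_nonneg (.of_forall fun a ↦ (exp_pos _).le)
    (integrable_exp_mul_of_ae_le hg hgM hx) (exp (x * (M - η))))
  refine mul_le_mul_of_nonneg_left (measureReal_mono fun a (ha : M - η < g a) ↦ ?_) (exp_pos _).le
  exact exp_le_exp.2 (by gcongr)

theorem integral_sub_mul_exp_le (hg : Integrable g μ) (hgM : ∀ᵐ a ∂μ, g a ≤ M) (hx : 0 ≤ x)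
    {s : ℝ} (hs : 0 ≤ s) :
    ∫ a, (M - g a) * exp (x * g a) ∂μ ≤
      s * ∫ a, exp (x * g a) ∂μ + exp (x * (M - s)) * ∫ a, (M - g a) ∂μ := by
  have hexp := integrable_exp_mul_of_ae_le hg.aestronglyMeasurable hgM hx
  have hgap : Integrable (fun a ↦ M - g a) μ := (integrable_const M).sub hg
  calc ∫ a, (M - g a) * exp (x * g a) ∂μ
      ≤ ∫ a, (s * exp (x * g a) + exp (x * (M - s)) * (M - g a)) ∂μ := by
        refine integral_mono_ae ?_ ((hexp.const_mul s).add (hgap.const_mul _)) ?_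
        · exact ((hexp.const_mul M).sub (integrable_mul_exp_mul_of_ae_le hg hgM hx)).congr
            (.of_forall fun a ↦ by simp only [Pi.sub_apply]; ring)
        filter_upwards [hgM] with a ha
        have := exp_pos (x * g a)
        rcases le_or_gt (M - s) (g a) with hs' | hs'
        · have : 0 ≤ exp (x * (M - s)) * (M - g a) := by positivity
          nlinarith
        · have : exp (x * g a) ≤ exp (x * (M - s)) := by gcongr
          nlinarith
    _ = _ := by
        rw [integral_add (hexp.const_mul s) (hgap.const_mul _), integral_const_mul,
          integral_const_mul]

theorem integral_sub_mul_exp_eq (hg : Integrable g μ) (hgM : ∀ᵐ a ∂μ, g a ≤ M) (hx : 0 ≤ x) :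
    ∫ a, (M - g a) * exp (x * g a) ∂μ =
      M * ∫ a, exp (x * g a) ∂μ - ∫ a, g a * exp (x * g a) ∂μ := by
  simp_rw [sub_mul]
  rw [integral_sub ((integrable_exp_mul_of_ae_le hg.aestronglyMeasurable hgM hx).const_mul M)
    (integrable_mul_exp_mul_of_ae_le hg hgM hx), integral_const_mul]

theorem integral_sub_mul_exp_div_integral_exp_le (hg : Integrable g μ)
    (hgM : ∀ᵐ a ∂μ, g a ≤ M) (hx : 0 ≤ x) {s : ℝ} (hs : 0 ≤ s)
    (hpos : 0 < μ.real {a | M - s / 2 < g a}) :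
    (∫ a, (M - g a) * exp (x * g a) ∂μ) / ∫ a, exp (x * g a) ∂μ ≤
      s + (∫ a, (M - g a) ∂μ) / μ.real {a | M - s / 2 < g a} * exp (-(s / 2 * x)) := by
  set Z := ∫ a, exp (x * g a) ∂μ
  set p := μ.real {a | M - s / 2 < g a}
  have hZ : p * exp (x * (M - s / 2)) ≤ Z :=
    measureReal_mul_exp_le_integral_exp hg.aestronglyMeasurable hgM hx _
  have hZpos : 0 < Z := lt_of_lt_of_le (by positivity) hZ
  have hC : 0 ≤ ∫ a, (M - g a) ∂μ :=
    integral_nonneg_of_ae (by filter_upwards [hgM] with a ha using sub_nonneg.2 ha)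
  calc (∫ a, (M - g a) * exp (x * g a) ∂μ) / Z
      ≤ (s * Z + exp (x * (M - s)) * ∫ a, (M - g a) ∂μ) / Z := by
        gcongr; exact integral_sub_mul_exp_le hg hgM hx hs
    _ = s + exp (x * (M - s)) * (∫ a, (M - g a) ∂μ) / Z := by field_simp
    _ ≤ s + exp (x * (M - s)) * (∫ a, (M - g a) ∂μ) / (p * exp (x * (M - s / 2))) := by
        gcongr
    _ = s + (∫ a, (M - g a) ∂μ) / p * exp (-(s / 2 * x)) := by
        rw [show x * (M - s) = x * (M - s / 2) + -(s / 2 * x) by ring, exp_add]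
        field_simp

theorem tendsto_integral_mul_exp_div_integral_exp (hg : Integrable g μ)
    (hgM : ∀ᵐ a ∂μ, g a ≤ M) (hsup : ∀ η > 0, μ {a | M - η < g a} ≠ 0) :
    Tendsto (fun x ↦ (∫ a, g a * exp (x * g a) ∂μ) / ∫ a, exp (x * g a) ∂μ) atTop (𝓝 M) := by
  have hpos : ∀ η > 0, 0 < μ.real {a | M - η < g a} := fun η hη ↦
    ENNReal.toReal_pos (hsup η hη) (measure_ne_top _ _)
  have hZpos : ∀ x ≥ (0 : ℝ), 0 < ∫ a, exp (x * g a) ∂μ := fun x hx ↦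
    lt_of_lt_of_le (mul_pos (hpos 1 one_pos) (exp_pos _))
      (measureReal_mul_exp_le_integral_exp hg.aestronglyMeasurable hgM hx 1)
  have hgap : ∀ x ≥ (0 : ℝ), (∫ a, g a * exp (x * g a) ∂μ) / ∫ a, exp (x * g a) ∂μ =
      M - (∫ a, (M - g a) * exp (x * g a) ∂μ) / ∫ a, exp (x * g a) ∂μ := fun x hx ↦ by
    rw [integral_sub_mul_exp_eq hg hgM hx, sub_div, mul_div_cancel_right₀ _ (hZpos x hx).ne',
      sub_sub_cancel]
  refine tendsto_order.2 ⟨fun b hb ↦ ?_, fun b hb ↦ ?_⟩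
  · set s := (M - b) / 2
    have hs : 0 < s := by simp only [s]; linarith
    have hdecay : Tendsto (fun x ↦ (∫ a, (M - g a) ∂μ) / μ.real {a | M - s / 2 < g a} *
        exp (-(s / 2 * x))) atTop (𝓝 0) := by
      simpa using (tendsto_exp_neg_atTop_nhds_zero.comp
        (tendsto_id.const_mul_atTop (half_pos hs))).const_mul _
    filter_upwards [hdecay.eventually_lt_const hs, eventually_ge_atTop 0] with x hsmall hx
    rw [hgap x hx]
    have := integral_sub_mul_exp_div_integral_exp_le hg hgM hx hs.le (hpos _ (half_pos hs))
    simp only [s] at *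
    linarith
  · filter_upwards [eventually_ge_atTop 0] with x hx
    rw [hgap x hx]
    have : 0 ≤ (∫ a, (M - g a) * exp (x * g a) ∂μ) / ∫ a, exp (x * g a) ∂μ :=
      div_nonneg (integral_nonneg_of_ae (by
        filter_upwards [hgM] with a ha using mul_nonneg (sub_nonneg.2 ha) (exp_pos _).le))
        (hZpos x hx).le
    linarith

end MeasureTheory

theorem volume_restrict_Ioc_setOf_sub_lt_cos_ne_zero {η : ℝ} (hη : 0 < η) :
    volume.restrict (Ioc 0 (2 * π)) {θ | 1 - η < cos θ} ≠ 0 := by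
  obtain ⟨r, hr, hball⟩ := Metric.isOpen_iff.1 (isOpen_lt continuous_const continuous_cos) 0
    (show 1 - η < cos 0 by rw [cos_zero]; linarith)
  have hr' : 0 < min r (2 * π) := lt_min hr two_pi_pos
  rw [Measure.restrict_apply' measurableSet_Ioc, ← pos_iff_ne_zero]
  refine lt_of_lt_of_le (by simpa using hr') (measure_mono (s := Ioo 0 (min r (2 * π))) ?_)
  rintro θ ⟨hθ0, hθr⟩
  refine ⟨hball ?_, hθ0, hθr.le.trans (min_le_right _ _)⟩
  rw [Metric.mem_ball, Real.dist_0_eq_abs, abs_of_pos hθ0]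
  exact hθr.trans_le (min_le_left _ _)

theorem V_tendsto_one : Filter.Tendsto V Filter.atTop (nhds 1) := by
  have h := tendsto_integral_mul_exp_div_integral_exp (μ := volume.restrict (Ioc 0 (2 * π)))
    continuous_cos.integrableOn_Ioc (ae_of_all _ cos_le_one)
    fun η hη ↦ volume_restrict_Ioc_setOf_sub_lt_cos_ne_zero hη
  convert h using 2 with x
  simp only [V, integral_of_le two_pi_pos.le]
end
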